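/- Let γ > 0, A > 0, and 0 < ε ≤ min{ln 2, γ/c₁, γ·ln 2/(2A)} where c₁ := 16γ + 72A + 1. Suppose φ : [0,T) → ℝ is positive and satisfies φ(0) = γ + ε and 1/φ(t) = (1/(γ+ε))·exp(-Aε∫₀ᵗ e^{-(γ/2)s} ds) - ε e^ε ∫₀ᵗ exp(-Aε∫ₛᵗ e^{-(γ/2)σ} dσ)·e^{-(γ/2)s} ds for all t ∈ (0,T). Then φ(t) ≤ γ + c₁·ε for all t ∈ (0,T). -/

import Mathlib

set_option maxHeartbeats 1000000

theorem stmt_9 (γ A ε T : ℝ) (hγ : 0 < γ) (hA : 0 < A) (hε : 0 < ε)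
    (c₁ : ℝ) (hc₁ : c₁ = 16 * γ + 72 * A + 1)
    (hε₁ : ε ≤ Real.log 2) (hε₂ : ε ≤ γ / c₁) (hε₃ : ε ≤ γ * Real.log 2 / (2 * A))
    (φ : ℝ → ℝ) (hpos : ∀ t, 0 ≤ t → t < T → 0 < φ t)
    (h0 : φ 0 = γ + ε)
    (hrep : ∀ t, 0 < t → t < T →
      1 / φ t = (1 / (γ + ε)) *
          Real.exp (-A * ε * ∫ s in (0 : ℝ)..t, Real.exp (-(γ / 2) * s))
        - ε * Real.exp ε *
          ∫ s in (0 : ℝ)..t,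
            Real.exp (-A * ε * ∫ σ in s..t, Real.exp (-(γ / 2) * σ)) *
              Real.exp (-(γ / 2) * s)) :
    ∀ t, 0 < t → t < T → φ t ≤ γ + c₁ * ε := by
  intro t ht hT
  set c : ℝ := -(γ / 2) with hcdef
  have hcneg : c < 0 := by rw [hcdef]; linarith
  have hcne : c ≠ 0 := ne_of_lt hcneg
  have key : ∀ a b : ℝ, (∫ s in a..b, Real.exp (c * s)) =
      (Real.exp (c * b) - Real.exp (c * a)) / c := by
    intro a b
    rw [intervalIntegral.integral_comp_mul_left Real.exp hcne, integral_exp, smul_eq_mul]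
    ring
  have hrept := hrep t ht hT
  simp only [key, mul_zero, Real.exp_zero] at hrept
  -- bounds on J := (exp(c*t) - 1)/c
  set J : ℝ := (Real.exp (c * t) - 1) / c with hJdef
  have he1 : 0 < Real.exp (c * t) := Real.exp_pos _
  have he2 : Real.exp (c * t) ≤ 1 := by
    rw [show (1:ℝ) = Real.exp 0 by simp]
    exact Real.exp_le_exp.mpr (by nlinarith)
  have hγ' : γ ≠ 0 := ne_of_gt hγ
  have hJeq : J = (1 - Real.exp (c * t)) * 2 / γ := by
    rw [hJdef, hcdef]
    have h2 : -(γ / 2) ≠ 0 := by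
      intro h; apply hγ'; linarith [neg_eq_zero.mp h]
    rw [div_eq_div_iff h2 hγ']; ring
  have hJ0 : 0 ≤ J := by
    rw [hJeq]
    apply div_nonneg _ hγ.le
    nlinarith
  have hJle : J ≤ 2 / γ := by
    rw [hJeq]
    gcongr
    nlinarith
  -- the second integral
  set g : ℝ → ℝ := fun s =>
    Real.exp (-A * ε * ((Real.exp (c * t) - Real.exp (c * s)) / c)) * Real.exp (c * s)
    with hgdef
  have hgcont : Continuous g := by
    rw [hgdef]; fun_prop
  have hgle : ∀ s ∈ Set.Icc (0:ℝ) t, g s ≤ Real.exp (c * s) := by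
    intro s hs
    have : Real.exp (c * t) ≤ Real.exp (c * s) :=
      Real.exp_le_exp.mpr (by nlinarith [hs.2])
    have h1 : -A * ε * ((Real.exp (c * t) - Real.exp (c * s)) / c) ≤ 0 := by
      have hx : 0 ≤ (Real.exp (c * t) - Real.exp (c * s)) / c := by
        rw [div_nonneg_iff]; right; exact ⟨by linarith, hcneg.le⟩
      nlinarith [mul_nonneg (mul_nonneg hA.le hε.le) hx]
    have h2 : Real.exp (-A * ε * ((Real.exp (c * t) - Real.exp (c * s)) / c)) ≤ 1 := by
      rw [show (1:ℝ) = Real.exp 0 by simp]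
      exact Real.exp_le_exp.mpr h1
    rw [hgdef]
    nlinarith [Real.exp_pos (c * s)]
  have hKle : (∫ s in (0:ℝ)..t, g s) ≤ J := by
    have := intervalIntegral.integral_mono_on (μ := MeasureTheory.volume) ht.le
      (hgcont.intervalIntegrable 0 t)
      ((Real.continuous_exp.comp (continuous_const.mul continuous_id)).intervalIntegrable 0 t)
      hgle
    calc (∫ s in (0:ℝ)..t, g s) ≤ ∫ s in (0:ℝ)..t, Real.exp (c * s) := this
      _ = J := by rw [key, hJdef, mul_zero, Real.exp_zero]
  have hK0 : 0 ≤ ∫ s in (0:ℝ)..t, g s := by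
    apply intervalIntegral.integral_nonneg ht.le
    intro s _
    rw [hgdef]
    positivity
  set K : ℝ := ∫ s in (0:ℝ)..t, g s with hKdef
  have hrept' : 1 / φ t = 1 / (γ + ε) * Real.exp (-A * ε * J) - ε * Real.exp ε * K := by
    rw [hrept]
  -- exp ε ≤ 2
  have hexp2 : Real.exp ε ≤ 2 := by
    calc Real.exp ε ≤ Real.exp (Real.log 2) := Real.exp_le_exp.mpr hε₁
      _ = 2 := Real.exp_log (by norm_num)
  -- lower bound on first term
  have hc₁pos : 0 < c₁ := by rw [hc₁]; linarith
  have hc1e : c₁ * ε ≤ γ := by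
    have := (le_div_iff₀ hc₁pos).mp hε₂
    linarith
  have h1c : 1 ≤ c₁ := by rw [hc₁]; linarith
  have hεγ : ε ≤ γ := by nlinarith [mul_le_mul_of_nonneg_right h1c hε.le]
  have hexpJ : 1 - 2 * A * ε / γ ≤ Real.exp (-A * ε * J) := by
    have h1 := Real.add_one_le_exp (-A * ε * J)
    have h2 : A * ε * J ≤ A * ε * (2 / γ) :=
      mul_le_mul_of_nonneg_left hJle (by positivity)
    have h3 : A * ε * (2 / γ) = 2 * A * ε / γ := by ring
    nlinarith
  have ht1 : 1 / (γ + ε) * (1 - 2 * A * ε / γ) ≤ 1 / (γ + ε) * Real.exp (-A * ε * J) :=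
    mul_le_mul_of_nonneg_left hexpJ (by positivity)
  have ht2 : ε * Real.exp ε * K ≤ 4 * ε / γ := by
    have h1 : ε * Real.exp ε * K ≤ ε * 2 * K := by
      apply mul_le_mul_of_nonneg_right _ hK0
      nlinarith [Real.exp_pos ε]
    have h2 : ε * 2 * K ≤ ε * 2 * (2 / γ) :=
      mul_le_mul_of_nonneg_left (le_trans hKle hJle) (by positivity)
    have h3 : ε * 2 * (2 / γ) = 4 * ε / γ := by ring
    linarith
  -- algebraic inequality
  have hden2 : 0 < γ + c₁ * ε := by positivity
  have hB : 1 / (γ + c₁ * ε) ≤ 1 / (γ + ε) * (1 - 2 * A * ε / γ) - 4 * ε / γ := by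
    have heq : 1 / (γ + ε) * (1 - 2 * A * ε / γ) - 4 * ε / γ
        = (γ - 2 * A * ε - 4 * ε * (γ + ε)) / (γ * (γ + ε)) := by
      field_simp
    rw [heq, div_le_div_iff₀ hden2 (by positivity)]
    have hm : (2 * A + 4 * γ + 4 * ε) * (c₁ * ε) ≤ (2 * A + 4 * γ + 4 * ε) * γ :=
      mul_le_mul_of_nonneg_left hc1e (by linarith)
    nlinarith [mul_pos hγ hε, mul_le_mul_of_nonneg_right hεγ hγ.le, hc₁,
      mul_pos hA hε, mul_pos hε hε]
  have hfinal : 1 / (γ + c₁ * ε) ≤ 1 / φ t := by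
    rw [hrept']; linarith
  have hφ := hpos t ht.le hT
  exact (one_div_le_one_div hden2 hφ).mp hfinal
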